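/- arXiv:1609.01061 — 4 statements merged into one kernel-verified Lean document; each statement's English description precedes it below -/
import Mathlib

section
/- Let A and A' be two n-dimensional algebras over a field K, let (f, g, h) be an isotopism from A to A', and let S be a vector subspace of A. Then f(Ann_{A^-}(S)) = Ann_{A'^-}(g(S)), i.e., the image under f of the left annihilator of S equals the left annihilator in A' of the image of S under g. -/
theorem Equiv.image_setOf_forall_mem_eq_zero {M N P M' N' P' : Type*} [Zero P] [Zero P']
    (mul : M → N → P) (mul' : M' → N' → P') (f : M ≃ M') (g : N → N') {h : P → P'}
    (h_inj : Function.Injective h) (h_zero : h 0 = 0)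
    (hiso : ∀ u v, mul' (f u) (g v) = h (mul u v)) (s : Set N) :
    f '' {u | ∀ v ∈ s, mul u v = 0} = {u' | ∀ v' ∈ g '' s, mul' u' v' = 0} := by
  rw [f.image_eq_preimage_symm]
  ext u'
  obtain ⟨u, rfl⟩ := f.surjective u'
  simp only [Set.mem_preimage, Set.mem_ofPred_eq, Equiv.symm_apply_apply,
    Set.forall_mem_image, hiso, ← h_zero, h_inj.eq_iff]

theorem stmt_0_general {K A A' : Type*} [Field K]
    [AddCommGroup A] [Module K A] [AddCommGroup A'] [Module K A']
    (mul : A →ₗ[K] A →ₗ[K] A) (mul' : A' →ₗ[K] A' →ₗ[K] A')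
    (f g h : A ≃ₗ[K] A')
    (hiso : ∀ u v : A, mul' (f u) (g v) = h (mul u v))
    (S : Submodule K A) :
    ⇑f '' {u : A | ∀ v ∈ S, mul u v = 0} =
      {u : A' | ∀ v ∈ ⇑g '' (S : Set A), mul' u v = 0} :=
  f.toEquiv.image_setOf_forall_mem_eq_zero (mul · ·) (mul' · ·) g h.injective h.map_zero hiso S

theorem stmt_0 {K A A' : Type*} [Field K]
    [AddCommGroup A] [Module K A] [AddCommGroup A'] [Module K A']
    (n : ℕ) (hA : Module.finrank K A = n) (hA' : Module.finrank K A' = n)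
    (mul : A →ₗ[K] A →ₗ[K] A) (mul' : A' →ₗ[K] A' →ₗ[K] A')
    (f g h : A ≃ₗ[K] A')
    (hiso : ∀ u v : A, mul' (f u) (g v) = h (mul u v))
    (S : Submodule K A) :
    ⇑f '' {u : A | ∀ v ∈ S, mul u v = 0} =
      {u : A' | ∀ v ∈ ⇑g '' (S : Set A), mul' u v = 0} :=
  stmt_0_general mul mul' f g h hiso S
end

section
/- Let A and A' be two n-dimensional algebras over a field K, let (f, g, h) be an isotopism from A to A', and let S be a vector subspace of A. Then g(Ann_{A^+}(S)) = Ann_{A'^+}(f(S)), i.e., the image under g of the right annihilator of S equals the right annihilator in A' of the image of S under f. -/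
theorem stmt_1_general {K A A' : Type*} [Field K]
    [AddCommGroup A] [Module K A] [AddCommGroup A'] [Module K A']
    (mul : A →ₗ[K] A →ₗ[K] A) (mul' : A' →ₗ[K] A' →ₗ[K] A')
    (f g h : A ≃ₗ[K] A')
    (hiso : ∀ u v : A, mul' (f u) (g v) = h (mul u v))
    (S : Submodule K A) :
    ⇑g '' {u : A | ∀ v ∈ S, mul v u = 0} =
      {u : A' | ∀ v ∈ ⇑f '' (S : Set A), mul' v u = 0} := by
  ext u'
  obtain ⟨u, rfl⟩ := g.surjective u'
  simp only [g.injective.mem_set_image, Set.mem_ofPred_eq, Set.forall_mem_image, SetLike.mem_coe,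
    hiso, LinearEquiv.map_eq_zero_iff]

theorem stmt_1 {K A A' : Type*} [Field K]
    [AddCommGroup A] [Module K A] [AddCommGroup A'] [Module K A']
    (n : ℕ) (hA : Module.finrank K A = n) (hA' : Module.finrank K A' = n)
    (mul : A →ₗ[K] A →ₗ[K] A) (mul' : A' →ₗ[K] A' →ₗ[K] A')
    (f g h : A ≃ₗ[K] A')
    (hiso : ∀ u v : A, mul' (f u) (g v) = h (mul u v))
    (S : Submodule K A) :
    ⇑g '' {u : A | ∀ v ∈ S, mul v u = 0} =
      {u : A' | ∀ v ∈ ⇑f '' (S : Set A), mul' v u = 0} :=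
  stmt_1_general mul mul' f g h hiso S
end

section
/- Let ([2], ·) be the partial magma whose only defined product is 1·1 = 1, and let ([2], ∘) be the partial magma whose defined products are exactly 1∘1 = 1 and 2∘1 = 1. Then ([2], ·) and ([2], ∘) are not isotopic as partial magmas, yet for every field K their partial magma rings A^· (with basis {e₁, e₂}) and A^∘ (with basis {e'₁, e'₂}) are isotopic: the triple (f, Id, Id), where f is the linear map with f(e₁) = e'₁ and f(e₂) = e'₂ − e'₁ and Id sends e_i to e'_i, is an isotopism from A^· to A^∘. -/
/-- The bilinear multiplication of the partial magma ring over `K` based on the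
partial magma `op` on `Fin n`: it satisfies `e_i * e_j = e_{i·j}` when `i·j` is
defined and `e_i * e_j = 0` otherwise. -/
def pmMul (K : Type*) [Field K] {n : ℕ} (op : Fin n → Fin n → Option (Fin n))
    (x y : Fin n → K) : Fin n → K :=
  fun k => ∑ i, ∑ j, if op i j = some k then x i * y j else 0

/-- The partial magma on `{1,2}` whose only defined product is `1·1 = 1`. -/
def opDot : Fin 2 → Fin 2 → Option (Fin 2) :=
  fun i j => if i = 0 ∧ j = 0 then some 0 else none

/-- The partial magma on `{1,2}` whose defined products are exactly `1∘1 = 1` and `2∘1 = 1`. -/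
def opCirc : Fin 2 → Fin 2 → Option (Fin 2) :=
  fun _ j => if j = 0 then some 0 else none

/-!
Definedness of `a ∘ b` depends only on `b`, and an isotopism transports this property, yet
`1·1` is defined while `2·1` is not; so the partial magmas are not isotopic.

In the rings, `x y = (x₁ + x₂) y₁ e'₁` in `A^∘` and `x y = x₁ y₁ e₁` in `A^·`; the shear
`f x = (x₁ - x₂, x₂)` turns the coordinate sum of `f x` back into `x₁`.
-/

theorem isSome_congr_left_of_isotopism {M N : Type*} {op : M → M → Option M}
    {op' : N → N → Option N} {α β γ : M → N}
    (h : ∀ i j, op' (α i) (β j) = Option.map γ (op i j))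
    (hop' : ∀ a a' b, (op' a b).isSome = (op' a' b).isSome) (i i' j : M) :
    (op i j).isSome = (op i' j).isSome := by
  rw [← Option.isSome_map (f := γ), ← h, hop' _ (α i'), h, Option.isSome_map]

section Shear

variable (R : Type*) [Ring R]

def shear : (Fin 2 → R) ≃ₗ[R] (Fin 2 → R) :=
  LinearEquiv.transvection (f := LinearMap.proj 1) (v := -Pi.single 0 1) (by simp)

variable {R}

theorem shear_apply (x : Fin 2 → R) : shear R x = x - x 1 • Pi.single 0 1 := by
  simp [shear, LinearMap.transvection.apply, sub_eq_add_neg]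

theorem shear_apply_zero_add_apply_one (x : Fin 2 → R) : shear R x 0 + shear R x 1 = x 0 := by
  simp [shear_apply]

end Shear

section Multiplication

variable {K : Type*} [Field K]

theorem pmMul_opDot (x y : Fin 2 → K) : pmMul K opDot x y = Pi.single 0 (x 0 * y 0) := by
  ext k; fin_cases k <;> simp [pmMul, opDot, Fin.sum_univ_two]

theorem pmMul_opCirc (x y : Fin 2 → K) :
    pmMul K opCirc x y = Pi.single 0 ((x 0 + x 1) * y 0) := by
  ext k; fin_cases k <;> simp [pmMul, opCirc, Fin.sum_univ_two, add_mul]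

end Multiplication

theorem stmt_6 (K : Type*) [Field K] :
    (¬ ∃ α β γ : Equiv.Perm (Fin 2),
        ∀ i j, opCirc (α i) (β j) = Option.map γ (opDot i j)) ∧
    (∃ f : (Fin 2 → K) ≃ₗ[K] (Fin 2 → K),
        f (Pi.single 0 1) = Pi.single 0 1 ∧
        f (Pi.single 1 1) = Pi.single 1 1 - Pi.single 0 1 ∧
        ∀ x y : Fin 2 → K, pmMul K opCirc (f x) y = pmMul K opDot x y) := by
  refine ⟨fun ⟨α, β, γ, h⟩ => ?_, shear K, by simp [shear_apply], by simp [shear_apply], ?_⟩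
  · have hdot := isSome_congr_left_of_isotopism h (fun _ _ _ => rfl) 0 1 0
    simp [opDot] at hdot
  · intro x y
    rw [pmMul_opCirc, pmMul_opDot, shear_apply_zero_add_apply_one]
end

section
/- Let A be a finite-dimensional algebra over a finite field K and let 𝟏_S denote the characteristic function of a set S. In the graph G₂(A): (i) for all u ∉ Ann_{A^-}(A), the degree of r_u equals |A ∖ Ann_{A^+}({u})| + 𝟏_{A ∖ Ann_{A^+}(A)}(u) + 𝟏_{A²}(u); (ii) for all u ∉ Ann_{A^+}(A), the degree of c_u equals |A ∖ Ann_{A^-}({u})| + 𝟏_{A ∖ Ann_{A^-}(A)}(u) + 𝟏_{A²}(u); (iii) for all u ∈ A² ∖ {0}, the degree of s_u equals 𝟏_{A ∖ Ann_{A^-}(A)}(u) + 𝟏_{A ∖ Ann_{A^+}(A)}(u) + Σ_{v ∈ A} |ad_v^{-1}(u)|, where ad_v : A → A is the map w ↦ vw. -/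
/-- Vertices of the graphs `G₁(A)` and `G₂(A)`: row vertices `r u`, column
vertices `c u`, symbol vertices `s u` and cell vertices `t u v`. -/
inductive Vert (A : Type*) : Type _
  | r : A → Vert A
  | c : A → Vert A
  | s : A → Vert A
  | t : A → A → Vert A

section Graphs

variable {A : Type*} [Zero A]

/-- The left annihilator `Ann_{A⁻}(A)` of the algebra with product `mul`. -/
def annL (mul : A → A → A) : Set A := {u | ∀ v, mul u v = 0}

/-- The right annihilator `Ann_{A⁺}(A)` of the algebra with product `mul`. -/
def annR (mul : A → A → A) : Set A := {u | ∀ v, mul v u = 0}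

/-- The derived set `A² = {uv : u, v ∈ A}` of the algebra with product `mul`. -/
def derived (mul : A → A → A) : Set A := {w | ∃ u v, mul u v = w}

/-- The vertex set of `G₁(A)` and `G₂(A)`:
`R_A = {r_u : u ∈ A ∖ Ann_{A⁻}(A)}`, `C_A = {c_u : u ∈ A ∖ Ann_{A⁺}(A)}`,
`S_A = {s_u : u ∈ A² ∖ {0}}`, `T_A = {t_{u,v} : u, v ∈ A, uv ≠ 0}`. -/
def IsVert (mul : A → A → A) : Vert A → Prop
  | .r u => u ∉ annL mul
  | .c u => u ∉ annR mul
  | .s u => u ∈ derived mul ∧ u ≠ 0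
  | .t u v => mul u v ≠ 0

/-- The adjacency relation of `G₁(A)`: edges `r_u t_{u,v}`, `c_v t_{u,v}` and
`s_{uv} t_{u,v}` for every `u, v ∈ A` with `uv ≠ 0`. -/
inductive G1Adj (mul : A → A → A) : Vert A → Vert A → Prop
  | rt (u v : A) : mul u v ≠ 0 → G1Adj mul (.r u) (.t u v)
  | tr (u v : A) : mul u v ≠ 0 → G1Adj mul (.t u v) (.r u)
  | ct (u v : A) : mul u v ≠ 0 → G1Adj mul (.c v) (.t u v)
  | tc (u v : A) : mul u v ≠ 0 → G1Adj mul (.t u v) (.c v)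
  | st (u v : A) : mul u v ≠ 0 → G1Adj mul (.s (mul u v)) (.t u v)
  | ts (u v : A) : mul u v ≠ 0 → G1Adj mul (.t u v) (.s (mul u v))

lemma G1Adj.ne {mul : A → A → A} {x y : Vert A} (h : G1Adj mul x y) : x ≠ y := by
  cases h <;> simp

/-- The graph `G₁(A)`, on the vertex set `R_A ∪ C_A ∪ S_A ∪ T_A`. -/
def G1 (mul : A → A → A) : SimpleGraph {x : Vert A // IsVert mul x} where
  Adj x y := G1Adj mul x.1 y.1
  symm := by constructor; rintro ⟨x, hx⟩ ⟨y, hy⟩ h; cases h <;> constructor <;> assumption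
  loopless := ⟨fun x h => h.ne rfl⟩

/-- The adjacency relation of `G₂(A)`: that of `G₁(A)` together with the extra
edges `r_u c_u` for `u ∈ A ∖ Ann_A(A)`, `c_u s_u` for `u ∈ A² ∖ Ann_{A⁺}(A)`
and `r_u s_u` for `u ∈ A² ∖ Ann_{A⁻}(A)`. -/
inductive G2Adj (mul : A → A → A) : Vert A → Vert A → Prop
  | g1 {x y : Vert A} : G1Adj mul x y → G2Adj mul x y
  | rc (u : A) : u ∉ annL mul ∩ annR mul → G2Adj mul (.r u) (.c u)
  | cr (u : A) : u ∉ annL mul ∩ annR mul → G2Adj mul (.c u) (.r u)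
  | cs (u : A) : u ∈ derived mul \ annR mul → G2Adj mul (.c u) (.s u)
  | sc (u : A) : u ∈ derived mul \ annR mul → G2Adj mul (.s u) (.c u)
  | rs (u : A) : u ∈ derived mul \ annL mul → G2Adj mul (.r u) (.s u)
  | sr (u : A) : u ∈ derived mul \ annL mul → G2Adj mul (.s u) (.r u)

lemma G2Adj.ne {mul : A → A → A} {x y : Vert A} (h : G2Adj mul x y) : x ≠ y := by
  cases h with
  | g1 h => exact h.ne
  | _ => simp

/-- The graph `G₂(A)`, on the vertex set `R_A ∪ C_A ∪ S_A ∪ T_A`. -/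
def G2 (mul : A → A → A) : SimpleGraph {x : Vert A // IsVert mul x} where
  Adj x y := G2Adj mul x.1 y.1
  symm := by
    constructor
    rintro ⟨x, hx⟩ ⟨y, hy⟩ h
    cases h with
    | g1 h => exact .g1 (by cases h <;> constructor <;> assumption)
    | rc u h => exact .cr u h
    | cr u h => exact .rc u h
    | cs u h => exact .sc u h
    | sc u h => exact .cs u h
    | rs u h => exact .sr u h
    | sr u h => exact .rs u h
  loopless := ⟨fun x h => h.ne rfl⟩

/-- The color of a vertex: row, column, symbol or cell. -/
def Vert.color : Vert A → Fin 4
  | .r _ => 0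
  | .c _ => 1
  | .s _ => 2
  | .t _ _ => 3

end Graphs

/-!
In `G₂(A)` the neighbours of `r_u` are the cells `t_{u,w}` with `uw ≠ 0`, together with `c_u` and
`s_u` whenever these are vertices (`u ∉ Ann_{A⁺}(A)`, resp. `u ∈ A²`; `u ≠ 0` is automatic). The
same holds for `c_u` with the cells `t_{w,u}`, and for `s_u` with the cells `t_{v,w}`, `vw = u`.
Since `t` is injective in both arguments, counting these disjoint pieces gives the degrees.
-/

instance {A : Type*} [Finite A] : Finite (Vert A) :=
  Finite.of_surjective
    (fun x : A ⊕ A ⊕ A ⊕ A × A => match x with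
      | .inl a => Vert.r a
      | .inr (.inl a) => Vert.c a
      | .inr (.inr (.inl a)) => Vert.s a
      | .inr (.inr (.inr (a, b))) => Vert.t a b)
    fun
      | .r a => ⟨.inl a, rfl⟩
      | .c a => ⟨.inr (.inl a), rfl⟩
      | .s a => ⟨.inr (.inr (.inl a)), rfl⟩
      | .t a b => ⟨.inr (.inr (.inr (a, b))), rfl⟩

lemma Vert.t_injective2 {A : Type*} : Function.Injective2 (@Vert.t A) :=
  fun _ _ _ _ => Vert.t.inj

lemma Set.ncard_union_ite_singleton {α : Type*} {s : Set α} {a : α} {p : Prop} [Decidable p]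
    (ha : a ∉ s) (hs : s.Finite := by toFinite_tac) :
    (s ∪ if p then {a} else ∅).ncard = s.ncard + if p then 1 else 0 := by
  split_ifs
  · rw [Set.union_singleton, Set.ncard_insert_of_notMem ha hs]
  · rw [Set.union_empty, add_zero]

section Degrees

variable {A : Type*} [Zero A] {m : A → A → A}

lemma image_val_neighborSet_G2 (x : {x : Vert A // IsVert m x}) :
    Subtype.val '' (G2 m).neighborSet x = {y | IsVert m y ∧ G2Adj m x.1 y} := by
  ext y
  exact ⟨fun ⟨⟨y, hy⟩, hadj, hxy⟩ => hxy ▸ ⟨hy, hadj⟩, fun ⟨hy, hadj⟩ => ⟨⟨y, hy⟩, hadj, rfl⟩⟩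

open scoped Classical

lemma image_val_neighborSet_G2_r (h0 : ∀ v, m 0 v = 0) {u : A} (h : u ∉ annL m) :
    Subtype.val '' (G2 m).neighborSet ⟨.r u, h⟩ =
      Vert.t u '' {w | m u w ≠ 0} ∪ (if u ∉ annR m then {.c u} else ∅) ∪
        (if u ∈ derived m then {.s u} else ∅) := by
  have hu : u ≠ 0 := by rintro rfl; exact h h0
  rw [image_val_neighborSet_G2]
  ext y
  simp only [Set.mem_union, Set.mem_ite_empty_right, Set.mem_singleton_iff]
  constructor
  · rintro ⟨hy, hadj⟩
    cases hadj with
    | g1 hadj => cases hadj with | rt _ v hv => exact .inl (.inl ⟨v, hv, rfl⟩)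
    | rc => exact .inl (.inr ⟨hy, rfl⟩)
    | rs _ hd => exact .inr ⟨hd.1, rfl⟩
  · rintro ((⟨v, hv, rfl⟩ | ⟨hr, rfl⟩) | ⟨hd, rfl⟩)
    · exact ⟨hv, .g1 (.rt u v hv)⟩
    · exact ⟨hr, .rc u fun hc => h hc.1⟩
    · exact ⟨⟨hd, hu⟩, .rs u ⟨hd, h⟩⟩

lemma image_val_neighborSet_G2_c (h0 : ∀ v, m v 0 = 0) {u : A} (h : u ∉ annR m) :
    Subtype.val '' (G2 m).neighborSet ⟨.c u, h⟩ =
      (Vert.t · u) '' {w | m w u ≠ 0} ∪ (if u ∉ annL m then {.r u} else ∅) ∪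
        (if u ∈ derived m then {.s u} else ∅) := by
  have hu : u ≠ 0 := by rintro rfl; exact h h0
  rw [image_val_neighborSet_G2]
  ext y
  simp only [Set.mem_union, Set.mem_ite_empty_right, Set.mem_singleton_iff]
  constructor
  · rintro ⟨hy, hadj⟩
    cases hadj with
    | g1 hadj => cases hadj with | ct v _ hv => exact .inl (.inl ⟨v, hv, rfl⟩)
    | cr => exact .inl (.inr ⟨hy, rfl⟩)
    | cs _ hd => exact .inr ⟨hd.1, rfl⟩
  · rintro ((⟨v, hv, rfl⟩ | ⟨hl, rfl⟩) | ⟨hd, rfl⟩)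
    · exact ⟨hv, .g1 (.ct v u hv)⟩
    · exact ⟨hl, .cr u fun hc => h hc.2⟩
    · exact ⟨⟨hd, hu⟩, .cs u ⟨hd, h⟩⟩

lemma image_val_neighborSet_G2_s {u : A} (h : u ∈ derived m ∧ u ≠ 0) :
    Subtype.val '' (G2 m).neighborSet ⟨.s u, h⟩ =
      Function.uncurry Vert.t '' {p | m p.1 p.2 = u} ∪ (if u ∉ annL m then {.r u} else ∅) ∪
        (if u ∉ annR m then {.c u} else ∅) := by
  rw [image_val_neighborSet_G2]
  ext y
  simp only [Set.mem_union, Set.mem_ite_empty_right, Set.mem_singleton_iff]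
  constructor
  · rintro ⟨hy, hadj⟩
    cases hadj with
    | g1 hadj => cases hadj with | st a b _ => exact .inl (.inl ⟨(a, b), rfl, rfl⟩)
    | sr => exact .inl (.inr ⟨hy, rfl⟩)
    | sc => exact .inr ⟨hy, rfl⟩
  · rintro ((⟨⟨a, b⟩, rfl, rfl⟩ | ⟨hl, rfl⟩) | ⟨hr, rfl⟩)
    · exact ⟨h.2, .g1 (.st a b h.2)⟩
    · exact ⟨hl, .sr _ ⟨h.1, hl⟩⟩
    · exact ⟨hr, .sc _ ⟨h.1, hr⟩⟩

variable [Finite A]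

lemma ncard_neighborSet_G2_r (h0 : ∀ v, m 0 v = 0) {u : A} (h : u ∉ annL m) :
    ((G2 m).neighborSet ⟨.r u, h⟩).ncard =
      {w | m u w ≠ 0}.ncard + (if u ∉ annR m then 1 else 0) +
        (if u ∈ derived m then 1 else 0) := by
  rw [← Set.ncard_image_of_injective _ Subtype.val_injective, image_val_neighborSet_G2_r h0 h,
    Set.ncard_union_ite_singleton, Set.ncard_union_ite_singleton,
    Set.ncard_image_of_injective _ (Vert.t_injective2.right u)]
  · simp
  · split_ifs <;> simp

lemma ncard_neighborSet_G2_c (h0 : ∀ v, m v 0 = 0) {u : A} (h : u ∉ annR m) :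
    ((G2 m).neighborSet ⟨.c u, h⟩).ncard =
      {w | m w u ≠ 0}.ncard + (if u ∉ annL m then 1 else 0) +
        (if u ∈ derived m then 1 else 0) := by
  rw [← Set.ncard_image_of_injective _ Subtype.val_injective, image_val_neighborSet_G2_c h0 h,
    Set.ncard_union_ite_singleton, Set.ncard_union_ite_singleton,
    Set.ncard_image_of_injective _ (Vert.t_injective2.left u)]
  · simp
  · split_ifs <;> simp

lemma ncard_neighborSet_G2_s {u : A} (h : u ∈ derived m ∧ u ≠ 0) :
    ((G2 m).neighborSet ⟨.s u, h⟩).ncard =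
      (if u ∉ annL m then 1 else 0) + (if u ∉ annR m then 1 else 0) +
        {p : A × A | m p.1 p.2 = u}.ncard := by
  rw [← Set.ncard_image_of_injective _ Subtype.val_injective, image_val_neighborSet_G2_s h,
    Set.ncard_union_ite_singleton, Set.ncard_union_ite_singleton,
    Set.ncard_image_of_injective _ Vert.t_injective2.uncurry]
  · ac_rfl
  · simp
  · split_ifs <;> simp

end Degrees

open scoped Classical in
theorem stmt_13 {K A : Type*} [Field K] [Finite K]
    [AddCommGroup A] [Module K A] [Module.Finite K A]
    (mul : A →ₗ[K] A →ₗ[K] A) :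
    (∀ (u : A) (h : u ∉ annL fun a b : A => mul a b),
        ((G2 fun a b : A => mul a b).neighborSet ⟨Vert.r u, h⟩).ncard =
          {w : A | mul u w ≠ 0}.ncard +
            (if u ∉ annR fun a b : A => mul a b then 1 else 0) +
            (if u ∈ derived fun a b : A => mul a b then 1 else 0)) ∧
    (∀ (u : A) (h : u ∉ annR fun a b : A => mul a b),
        ((G2 fun a b : A => mul a b).neighborSet ⟨Vert.c u, h⟩).ncard =
          {w : A | mul w u ≠ 0}.ncard +
            (if u ∉ annL fun a b : A => mul a b then 1 else 0) +
            (if u ∈ derived fun a b : A => mul a b then 1 else 0)) ∧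
    (∀ (u : A) (h : u ∈ (derived fun a b : A => mul a b) ∧ u ≠ 0),
        ((G2 fun a b : A => mul a b).neighborSet ⟨Vert.s u, h⟩).ncard =
          (if u ∉ annL fun a b : A => mul a b then 1 else 0) +
            (if u ∉ annR fun a b : A => mul a b then 1 else 0) +
            {p : A × A | mul p.1 p.2 = u}.ncard) := by
  have : Finite A := Module.finite_of_finite K
  exact ⟨fun u => ncard_neighborSet_G2_r fun v => mul.map_zero₂ v,
    fun u => ncard_neighborSet_G2_c fun v => (mul v).map_zero,
    fun u => ncard_neighborSet_G2_s⟩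
end
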